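/- Any two maximal chains in the canonical submodule lattice L(M) of a string module M yield the same element of the symmetric group S_{n+1}: if σ = s_{i_1}⋯s_{i_n} and σ' = s_{j_1}⋯s_{j_n} are the reduced expressions given by the edge labels of two maximal chains, then σ = σ'. Moreover, whenever two edges labelled i and j bound a square (mesh) in the Hasse diagram of L(M), one has |i − j| > 1, so s_i s_j = s_j s_i. -/

import Mathlib

/-- A canonical submodule of the string module of a string with arrow data `s`
(`s.getD i false = true` means the `i`-th arrow is direct, pointing from vertex position
`i` to position `i + 1`; `false` means it is inverse, pointing from `i + 1` to `i`),
described by the set `S` of vertex positions supporting it: `S` must be closed under the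
arrow maps of the string module. -/
def IsCanonSub (s : List Bool) (S : Finset ℕ) : Prop :=
  (∀ i ∈ S, i < s.length + 1) ∧
  ∀ i < s.length,
    (s.getD i false = true → i ∈ S → i + 1 ∈ S) ∧
    (s.getD i false = false → i + 1 ∈ S → i ∈ S)

open Fin.NatCast in
/-- The simple transposition `s_i = (i, i+1)` in the symmetric group on
`{0, 1, …, n + 1}` (tiles are numbered `0, …, n`, so the ambient symmetric group is
`S_{n+2}`, the symmetric group on one more letter than the number of tiles). -/
def adjTrans (n : ℕ) (i : ℕ) : Equiv.Perm (Fin (n + 2)) :=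
  Equiv.swap (i : Fin (n + 2)) ((i + 1 : ℕ) : Fin (n + 2))

/-- `c`, with edge labels `lab`, is a maximal chain in the canonical submodule lattice of
the string with arrow data `s` (of length `n`, so the snake graph has `n + 1` tiles
numbered `0, …, n`): it runs from the zero submodule to the whole module, each step
inserting the single position `lab k`. -/
def IsSubmodMaxChain (n : ℕ) (s : List Bool) (c : Fin (n + 2) → Finset ℕ)
    (lab : Fin (n + 1) → ℕ) : Prop :=
  c 0 = ∅ ∧ c (Fin.last (n + 1)) = Finset.range (n + 1) ∧
  (∀ k, IsCanonSub s (c k)) ∧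
  ∀ k : Fin (n + 1), lab k ∉ c k.castSucc ∧ c k.succ = insert (lab k) (c k.castSucc)

/-!
Each arrow of the string forces one of its two endpoints to enter a canonical submodule before
the other, so adjacent positions `i` and `i + 1` appear in the same order in every maximal
chain. Hence two labels that can be added in either order (in a mesh, or in two different
chains) are never adjacent, and their simple transpositions commute. Two orderings of the same
set in which every inverted pair commutes have the same product.
-/

theorem List.Perm.prod_map_eq_of_pairwise {α M : Type*} [Monoid M] {f : α → M}
    {R : α → α → Prop} {l l' : List α} (hp : l.Perm l') (hl : l.Pairwise R)
    (hl' : l'.Pairwise R) (hcomm : ∀ x ∈ l, ∀ y ∈ l, R x y → R y x → Commute (f x) (f y)) :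
    (l.map f).prod = (l'.map f).prod := by
  induction l generalizing l' with
  | nil => rw [hp.nil_eq]
  | cons x t ih =>
    obtain ⟨l₁, l₂, rfl⟩ := List.append_of_mem (hp.subset List.mem_cons_self)
    have hx_l₁ : Commute (f x) (l₁.map f).prod := by
      refine Commute.list_prod_right _ _ fun _ hfy ↦ ?_
      obtain ⟨y, hy, rfl⟩ := List.mem_map.1 hfy
      have hyx : R y x := (List.pairwise_append.1 hl').2.2 y hy x List.mem_cons_self
      obtain rfl | hyt := List.mem_cons.1 (hp.symm.subset (List.mem_append_left _ hy))
      · exact Commute.refl _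
      · exact hcomm x List.mem_cons_self y (List.mem_cons_of_mem _ hyt)
          (List.rel_of_pairwise_cons hl hyt) hyx
    have ht : (t.map f).prod = ((l₁ ++ l₂).map f).prod :=
      ih ((List.perm_cons x).1 (hp.trans List.perm_middle)) hl.of_cons
        (hl'.sublist ((List.sublist_cons_self x l₂).append_left l₁))
        fun a ha b hb ↦ hcomm a (List.mem_cons_of_mem _ ha) b (List.mem_cons_of_mem _ hb)
    simp only [List.map_cons, List.prod_cons, List.map_append, List.prod_append, ht,
      ← mul_assoc, hx_l₁.eq]

/-- `j` must enter every canonical submodule before `i`. -/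
def Precedes (s : List Bool) (j i : ℕ) : Prop :=
  (i = j + 1 ∧ j < s.length ∧ s.getD j false = false) ∨
  (j = i + 1 ∧ i < s.length ∧ s.getD i false = true)

lemma Precedes.mem_of_isCanonSub_insert {s : List Bool} {S : Finset ℕ} {i j : ℕ}
    (hj : Precedes s j i) (hS : IsCanonSub s (insert i S)) : j ∈ S := by
  rcases hj with ⟨rfl, hj, harrow⟩ | ⟨rfl, hi, harrow⟩
  · simpa using (hS.2 j hj).2 harrow (Finset.mem_insert_self _ _)
  · simpa using (hS.2 i hi).1 harrow (Finset.mem_insert_self _ _)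

lemma IsCanonSub.le_length {s : List Bool} {S : Finset ℕ} {i : ℕ} (hS : IsCanonSub s S)
    (hi : i ∈ S) : i ≤ s.length :=
  Nat.lt_succ_iff.1 (hS.1 i hi)

lemma precedes_or_precedes_succ {s : List Bool} {i : ℕ} (hi : i < s.length) :
    Precedes s i (i + 1) ∨ Precedes s (i + 1) i := by
  cases harrow : s.getD i false
  · exact Or.inl (Or.inl ⟨rfl, hi, harrow⟩)
  · exact Or.inr (Or.inr ⟨rfl, hi, harrow⟩)

lemma add_one_lt_or_add_one_lt_of_not_precedes {s : List Bool} {i j : ℕ}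
    (hi : i ≤ s.length) (hj : j ≤ s.length) (hij : i ≠ j)
    (h₁ : ¬Precedes s i j) (h₂ : ¬Precedes s j i) : i + 1 < j ∨ j + 1 < i := by
  by_contra! h
  obtain rfl | rfl : j = i + 1 ∨ i = j + 1 := by omega
  · exact (precedes_or_precedes_succ (by omega)).elim h₁ h₂
  · exact (precedes_or_precedes_succ (by omega)).elim h₂ h₁

lemma adjTrans_commute {n i j : ℕ} (hi : i ≤ n) (hj : j ≤ n) (h : i + 1 < j ∨ j + 1 < i) :
    Commute (adjTrans n i) (adjTrans n j) := by
  refine (Equiv.Perm.disjoint_swap_swap ?_).commute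
  simp only [List.nodup_cons, List.mem_cons, List.not_mem_nil, List.nodup_nil, or_false,
    not_false_eq_true, and_true, Fin.ext_iff, Fin.val_natCast,
    Nat.mod_eq_of_lt (show i < n + 2 by omega), Nat.mod_eq_of_lt (show i + 1 < n + 2 by omega),
    Nat.mod_eq_of_lt (show j < n + 2 by omega), Nat.mod_eq_of_lt (show j + 1 < n + 2 by omega)]
  omega

lemma adjTrans_commute_of_not_precedes {n i j : ℕ} {s : List Bool} (hs : s.length = n)
    (hi : i ≤ n) (hj : j ≤ n) (h₁ : ¬Precedes s i j) (h₂ : ¬Precedes s j i) :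
    Commute (adjTrans n i) (adjTrans n j) := by
  obtain rfl | hij := eq_or_ne i j
  · exact Commute.refl _
  · exact adjTrans_commute hi hj
      (add_one_lt_or_add_one_lt_of_not_precedes (hs ▸ hi) (hs ▸ hj) hij h₁ h₂)

namespace IsSubmodMaxChain

variable {n : ℕ} {s : List Bool} {c : Fin (n + 2) → Finset ℕ} {lab : Fin (n + 1) → ℕ}

lemma monotone (hc : IsSubmodMaxChain n s c lab) : Monotone c :=
  Fin.monotone_iff_le_succ.2 fun k ↦ (hc.2.2.2 k).2 ▸ Finset.subset_insert _ _

lemma lab_mem (hc : IsSubmodMaxChain n s c lab) (k : Fin (n + 1)) : lab k ∈ c k.succ :=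
  (hc.2.2.2 k).2 ▸ Finset.mem_insert_self _ _

lemma lab_le (hc : IsSubmodMaxChain n s c lab) (k : Fin (n + 1)) : lab k ≤ n := by
  have := hc.monotone (Fin.le_last k.succ) (hc.lab_mem k)
  rwa [hc.2.1, Finset.mem_range, Nat.lt_succ_iff] at this

lemma lab_injective (hc : IsSubmodMaxChain n s c lab) : Function.Injective lab :=
  Function.Injective.of_lt_imp_ne fun a b hab heq ↦ (hc.2.2.2 b).1 <|
    heq ▸ hc.monotone (Fin.succ_le_castSucc_iff.2 hab) (hc.lab_mem a)

lemma perm_range (hc : IsSubmodMaxChain n s c lab) :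
    (List.ofFn lab).Perm (List.range (n + 1)) :=
  ((List.nodup_ofFn.2 hc.lab_injective).subperm fun _ hx ↦ by
    obtain ⟨k, rfl⟩ := List.mem_ofFn.1 hx
    exact List.mem_range.2 (Nat.lt_succ_of_le (hc.lab_le k))).perm_of_length_le (by simp)

lemma pairwise_not_precedes (hc : IsSubmodMaxChain n s c lab) :
    (List.ofFn lab).Pairwise fun x y ↦ ¬Precedes s y x :=
  List.pairwise_ofFn.2 fun a b hab hprec ↦ (hc.2.2.2 b).1 <|
    hc.monotone (Fin.castSucc_le_castSucc_iff.2 hab.le) <|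
      hprec.mem_of_isCanonSub_insert ((hc.2.2.2 a).2 ▸ hc.2.2.1 a.succ)

end IsSubmodMaxChain

lemma add_one_lt_or_add_one_lt_of_mesh {s : List Bool} {S : Finset ℕ} {i j : ℕ}
    (hiS : i ∉ S) (hjS : j ∉ S) (hij : i ≠ j)
    (hi : IsCanonSub s (insert i S)) (hj : IsCanonSub s (insert j S)) :
    i + 1 < j ∨ j + 1 < i :=
  add_one_lt_or_add_one_lt_of_not_precedes
    (hi.le_length (Finset.mem_insert_self _ _)) (hj.le_length (Finset.mem_insert_self _ _)) hij
    (fun h ↦ hiS (h.mem_of_isCanonSub_insert hj)) (fun h ↦ hjS (h.mem_of_isCanonSub_insert hi))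

/-- Any two maximal chains in the canonical submodule lattice `L(M)` of a string module
`M` yield the same element of the symmetric group: the products of the simple
transpositions given by their edge labels coincide.  Moreover, whenever two labels
`i, j` bound a square (mesh) in the Hasse diagram of `L(M)` (both can be added to a
canonical submodule in either order), one has `|i - j| > 1`, so the corresponding simple
transpositions commute. -/
theorem maximal_chains_same_coxeter_element (n : ℕ) (s : List Bool) (hs : s.length = n)
    (c c' : Fin (n + 2) → Finset ℕ) (lab lab' : Fin (n + 1) → ℕ)
    (hc : IsSubmodMaxChain n s c lab) (hc' : IsSubmodMaxChain n s c' lab') :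
    ((List.ofFn lab).map (adjTrans n)).prod = ((List.ofFn lab').map (adjTrans n)).prod ∧
    (∀ (S : Finset ℕ) (i j : ℕ), IsCanonSub s S → i ∉ S → j ∉ S → i ≠ j →
      IsCanonSub s (insert i S) → IsCanonSub s (insert j S) →
      (i + 1 < j ∨ j + 1 < i) ∧
        adjTrans n i * adjTrans n j = adjTrans n j * adjTrans n i) := by
  refine ⟨?_, fun S i j _ hiS hjS hij hi hj ↦ ?_⟩
  · refine (hc.perm_range.trans hc'.perm_range.symm).prod_map_eq_of_pairwise
      hc.pairwise_not_precedes hc'.pairwise_not_precedes fun x hx y hy hyx hxy ↦ ?_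
    obtain ⟨a, rfl⟩ := List.mem_ofFn.1 hx
    obtain ⟨b, rfl⟩ := List.mem_ofFn.1 hy
    exact adjTrans_commute_of_not_precedes hs (hc.lab_le a) (hc.lab_le b) hxy hyx
  · have hgap := add_one_lt_or_add_one_lt_of_mesh hiS hjS hij hi hj
    have hi_le : i ≤ n := hs ▸ hi.le_length (Finset.mem_insert_self _ _)
    have hj_le : j ≤ n := hs ▸ hj.le_length (Finset.mem_insert_self _ _)
    exact ⟨hgap, (adjTrans_commute hi_le hj_le hgap).eq⟩
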